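/- arXiv:2207.05168 — 6 statements merged into one kernel-verified Lean document; each statement's English description precedes it below -/
import Mathlib

section
/- Let G' be a simple graph on N ≥ 1 vertices and let Ã be a chiral adjacency matrix on G' whose rows all sum to zero, i.e. Ã·1 = 0 for the all-ones vector 1. Let G be the cone over G' with apex labeled 1, and let H be the Hermitian matrix on G obtained by replacing the G'-block of the adjacency matrix of G by Ã while keeping all entries between the apex and the other vertices equal to 1. Then for every real t, the return probability at the apex equals |(exp(−itH))_{11}|² = cos²(√N · t). -/
open Matrix

/-!
Let `e` be the indicator of the apex. Then `H e` is the indicator of the base, and since the rows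
of `Ã` sum to zero, `H (H e) = N e`. So for `A = -itH` we have `A² e = s² e` with `s = -it√N`,
while `A e` vanishes at the apex. Hence the odd terms of the exponential series contribute
nothing to the apex entry of `exp A`, and the even ones sum to `cosh s = cos (√N t)`.
-/

/-- The cone over a graph `G`: one new vertex (the apex, `none`) adjacent to every
vertex of `G`. -/
def coneGraph {V : Type*} (G : SimpleGraph V) : SimpleGraph (Option V) where
  Adj x y :=
    match x, y with
    | none, none => False
    | none, some _ => True
    | some _, none => True
    | some a, some b => G.Adj a b
  symm := ⟨by
    rintro (_ | a) (_ | b) h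
    · exact h
    · exact trivial
    · exact trivial
    · exact h.symm⟩
  loopless := ⟨by
    rintro (_ | a) h
    · exact h
    · exact h.ne rfl⟩

/-- A chiral adjacency matrix on a simple graph `G`: a Hermitian matrix whose entries
have modulus one on edges of `G` and vanish elsewhere. -/
def IsChiralAdjacency {V : Type*} (G : SimpleGraph V) (A : Matrix V V ℂ) : Prop :=
  A.IsHermitian ∧ (∀ j k, G.Adj j k → ‖A j k‖ = 1) ∧
    ∀ j k, ¬ G.Adj j k → A j k = 0

namespace Matrix

variable {n : Type*} [Fintype n] [DecidableEq n]

theorem hasSum_exp_mulVec (A : Matrix n n ℂ) (v : n → ℂ) :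
    HasSum (fun k : ℕ => (k.factorial : ℂ)⁻¹ • (A ^ k *ᵥ v)) (NormedSpace.exp A *ᵥ v) := by
  let _ : NormedRing (Matrix n n ℂ) := Matrix.linftyOpNormedRing
  let _ : NormedAlgebra ℂ (Matrix n n ℂ) := Matrix.linftyOpNormedAlgebra
  have hcont : Continuous fun B : Matrix n n ℂ => B *ᵥ v :=
    continuous_id.matrix_mulVec continuous_const
  have h := (NormedSpace.exp_series_hasSum_exp' (𝕂 := ℂ) A).map
    (AddMonoidHom.mk' (fun B : Matrix n n ℂ => B *ᵥ v) fun B C => add_mulVec B C v) hcont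
  simp only [Function.comp_def, AddMonoidHom.mk'_apply, smul_mulVec] at h
  exact h

theorem pow_mulVec_of_mulVec_eq_smul {R : Type*} [CommSemiring R] {B : Matrix n n R}
    {v : n → R} {c : R} (hv : B *ᵥ v = c • v) (k : ℕ) : B ^ k *ᵥ v = c ^ k • v := by
  induction k with
  | zero => simp
  | succ k ih => rw [pow_succ', ← mulVec_mulVec, ih, mulVec_smul, hv, smul_smul, pow_succ]

theorem exp_mulVec_apply_eq_cosh_mul {A : Matrix n n ℂ} {v : n → ℂ} {s : ℂ} {i : n}
    (hsq : A *ᵥ (A *ᵥ v) = s ^ 2 • v) (hi : (A *ᵥ v) i = 0) :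
    (NormedSpace.exp A *ᵥ v) i = Complex.cosh s * v i := by
  have hA2 : (A ^ 2) *ᵥ v = s ^ 2 • v := by rw [sq, ← mulVec_mulVec, hsq]
  have heven (k : ℕ) : A ^ (2 * k) *ᵥ v = s ^ (2 * k) • v := by
    rw [pow_mul, pow_mul, pow_mulVec_of_mulVec_eq_smul hA2]
  have hodd (k : ℕ) : (A ^ (2 * k + 1) *ᵥ v) i = 0 := by
    rw [pow_succ', ← mulVec_mulVec, heven, mulVec_smul, Pi.smul_apply, hi, smul_zero]
  have hcosh : HasSum (fun k : ℕ => (((2 * k).factorial : ℂ)⁻¹ • (A ^ (2 * k) *ᵥ v)) i)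
      (Complex.cosh s * v i) := by
    refine ((Complex.hasSum_cosh s).mul_right (v i)).congr_fun fun k => ?_
    rw [heven, smul_smul, Pi.smul_apply, smul_eq_mul]
    ring
  have hsinh : HasSum (fun k : ℕ => (((2 * k + 1).factorial : ℂ)⁻¹ • (A ^ (2 * k + 1) *ᵥ v)) i)
      0 := by
    simpa only [Pi.smul_apply, hodd, smul_zero] using hasSum_zero
  exact (Pi.hasSum.mp (hasSum_exp_mulVec A v) i).unique
    (HasSum.even_add_odd (f := fun k => ((k.factorial : ℂ)⁻¹ • (A ^ k *ᵥ v)) i) hcosh hsinh)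
      |>.trans (add_zero _)

end Matrix

def coneMatrix {V R : Type*} [Zero R] [One R] (A : Matrix V V R) : Matrix (Option V) (Option V) R
  | none, none => 0
  | none, some _ => 1
  | some _, none => 1
  | some j, some k => A j k

theorem coneMatrix_mulVec_mulVec_single_none {V R : Type*} [Fintype V] [DecidableEq V]
    [NonAssocSemiring R] {A : Matrix V V R} (hrow : A *ᵥ (fun _ => 1) = 0) :
    coneMatrix A *ᵥ (coneMatrix A *ᵥ Pi.single none 1) =
      (Fintype.card V : R) • Pi.single none 1 := by
  have hcol : coneMatrix A *ᵥ Pi.single none 1 = fun x => x.elim 0 fun _ => 1 := by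
    ext (_ | j) <;> simp [coneMatrix]
  rw [hcol]
  ext (_ | j)
  · simp [mulVec, dotProduct, Fintype.sum_option, coneMatrix]
  · simpa [mulVec, dotProduct, Fintype.sum_option, coneMatrix] using congrFun hrow j

theorem swift_stmt_2_general {N : ℕ}
    (Atil : Matrix (Fin N) (Fin N) ℂ)
    (hrow : Atil *ᵥ (fun _ => 1) = 0)
    (H : Matrix (Option (Fin N)) (Option (Fin N)) ℂ)
    (hH00 : H none none = 0)
    (hH0 : ∀ j : Fin N, H none (some j) = 1)
    (hH0' : ∀ j : Fin N, H (some j) none = 1)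
    (hHblock : ∀ j k : Fin N, H (some j) (some k) = Atil j k)
    (t : ℝ) :
    ‖(NormedSpace.exp ((-(t : ℂ) * Complex.I) • H)) none none‖ ^ 2 =
      Real.cos (Real.sqrt N * t) ^ 2 := by
  have hH : H = coneMatrix Atil := by
    ext (_ | j) (_ | k) <;> simp [coneMatrix, hH00, hH0, hH0', hHblock]
  set α : ℂ := -(t : ℂ) * Complex.I
  have hsq : (α • H) *ᵥ ((α • H) *ᵥ Pi.single none 1) =
      (α * Real.sqrt N) ^ 2 • Pi.single none 1 := by
    rw [smul_mulVec, smul_mulVec, mulVec_smul, hH, coneMatrix_mulVec_mulVec_single_none hrow,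
      smul_smul, smul_smul, Fintype.card_fin, mul_pow, ← Complex.ofReal_pow,
      Real.sq_sqrt N.cast_nonneg, sq, Complex.ofReal_natCast]
  have hapex : ((α • H) *ᵥ Pi.single none 1) none = 0 := by simp [hH00]
  have hcos : Complex.cosh (α * Real.sqrt N) = Real.cos (Real.sqrt N * t) := by
    rw [Complex.ofReal_cos, show α * Real.sqrt N = -((Real.sqrt N * t : ℝ) * Complex.I) by
      push_cast; ring, Complex.cosh_neg, Complex.cosh_mul_I]
  have hentry : NormedSpace.exp (α • H) none none = Real.cos (Real.sqrt N * t) := by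
    simpa [mulVec_single_one, hcos] using exp_mulVec_apply_eq_cosh_mul hsq hapex
  rw [hentry, Complex.norm_real, Real.norm_eq_abs, sq_abs]

/-- If the rows of a chiral adjacency matrix `Ã` on `G'` all sum to zero, then the
chiral quantum walk on the cone over `G'` obtained by replacing the `G'`-block of the
adjacency matrix by `Ã` (keeping apex entries equal to `1`) is swift: the return
probability at the apex is `cos²(√N t)`. -/
theorem swift_stmt_2 {N : ℕ} (hN : 1 ≤ N)
    (G' : SimpleGraph (Fin N)) (Atil : Matrix (Fin N) (Fin N) ℂ)
    (hA : IsChiralAdjacency G' Atil) (hrow : Atil *ᵥ (fun _ => 1) = 0)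
    (H : Matrix (Option (Fin N)) (Option (Fin N)) ℂ)
    (hH00 : H none none = 0)
    (hH0 : ∀ j : Fin N, H none (some j) = 1)
    (hH0' : ∀ j : Fin N, H (some j) none = 1)
    (hHblock : ∀ j k : Fin N, H (some j) (some k) = Atil j k)
    (t : ℝ) :
    ‖(NormedSpace.exp ((-(t : ℂ) * Complex.I) • H)) none none‖ ^ 2 =
      Real.cos (Real.sqrt N * t) ^ 2 :=
  swift_stmt_2_general Atil hrow H hH00 hH0 hH0' hHblock t
end

section
/- Let G be a finite simple graph and let v be a vertex of G of degree N ≥ 1. Suppose there exists a chiral Hamiltonian H_s on G generating a swift chiral quantum walk from v, i.e. |(exp(−itH_s))_{vv}|² = cos²(√N · t) for all t ≥ 0. Then the swift walk reaches a state orthogonal to v at time τ_s = π/(2√N), i.e. (exp(−iτ_s H_s))_{vv} = 0, and this is the shortest possible such time among all chiral Hamiltonians on G: for every chiral Hamiltonian H on G and every t with 0 < t < π/(2√N), one has (exp(−itH))_{vv} ≠ 0. -/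
open Matrix

/-- A chiral Hamiltonian on a simple graph `G`: a Hermitian matrix whose off-diagonal
entries have modulus one on edges of `G` and vanish on non-edges, with arbitrary (real)
diagonal entries. -/
def IsChiralHamiltonian {V : Type*} (G : SimpleGraph V) (H : Matrix V V ℂ) : Prop :=
  H.IsHermitian ∧ (∀ j k, j ≠ k → G.Adj j k → ‖H j k‖ = 1) ∧
    ∀ j k, j ≠ k → ¬ G.Adj j k → H j k = 0

/-!
Write `exp(-itH)_vv = ∑ⱼ pⱼ e^{-itλⱼ}`, where `λ` are the eigenvalues of `H` and `p` is the
spectral measure of the vertex `v`. Its mean is `m = H_vv` and, since `(H²)_vv = ∑ₖ |H_vk|²`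
and the off-diagonal entries of a chiral Hamiltonian have modulus one exactly on the edges, its
variance is `deg v = N`. Hence `Re (e^{imt} exp(-itH)_vv) = ∑ⱼ pⱼ cos (t (m - λⱼ))`, and
bounding `cos` below by the even parabola tangent to it at `±a`, `a = √N t`, gives
`∑ⱼ pⱼ cos (t (m - λⱼ)) ≥ cos a`, which is positive for `a < π / 2`.
-/

namespace Real

theorem mul_sin_le_mul_sin {s a : ℝ} (hs : 0 ≤ s) (hsa : s ≤ a) (ha : a ≤ π) :
    s * sin a ≤ a * sin s := by
  rcases hs.eq_or_lt with rfl | hs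
  · simp
  rcases hsa.eq_or_lt with rfl | hsa
  · rfl
  have h := strictConcaveOn_sin_Icc.secant_strict_mono (a := 0) ⟨le_rfl, pi_pos.le⟩
    ⟨hs.le, hsa.le.trans ha⟩ ⟨(hs.trans hsa).le, ha⟩ hs.ne' (hs.trans hsa).ne' hsa
  simp only [sin_zero, sub_zero] at h
  rw [div_lt_div_iff₀ (hs.trans hsa) hs] at h
  linarith

theorem mul_sin_le_mul_sin_of_le {a x : ℝ} (ha0 : 0 ≤ a) (ha : a ≤ π / 2) (hax : a ≤ x) :
    a * sin x ≤ x * sin a := by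
  rcases le_or_gt x π with hx | hx
  · exact mul_sin_le_mul_sin ha0 hax hx
  · have h := mul_sin_le_mul_sin ha0 ha (by linarith [pi_pos])
    rw [sin_pi_div_two, mul_one] at h
    nlinarith [sin_le_one x, sin_nonneg_of_nonneg_of_le_pi ha0 (by linarith)]

/-- The even parabola tangent to `cos` at `±a` lies below `cos` when `0 < a ≤ π / 2`. -/
theorem cos_sub_mul_sq_sub_sq_le_cos {a : ℝ} (ha0 : 0 < a) (ha : a ≤ π / 2) (s : ℝ) :
    cos a - sin a / (2 * a) * (s ^ 2 - a ^ 2) ≤ cos s := by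
  set k := sin a / (2 * a)
  set g : ℝ → ℝ := fun y => cos y + k * y ^ 2
  have hg : ∀ y, HasDerivAt g (-sin y + k * (2 * y)) y := fun y =>
    (hasDerivAt_cos y).add (((hasDerivAt_pow 2 y).const_mul k).congr_deriv (by ring))
  have hg' : ∀ y, -sin y + k * (2 * y) = (y * sin a - a * sin y) / a := fun y => by
    simp only [k]; field_simp; ring
  have hcont : Continuous g := by fun_prop
  have hanti : AntitoneOn g (Set.Icc 0 a) := by
    refine antitoneOn_of_deriv_nonpos (convex_Icc 0 a) hcont.continuousOn
      (fun y _ => (hg y).differentiableAt.differentiableWithinAt) fun y hy => ?_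
    rw [interior_Icc] at hy
    rw [(hg y).deriv, hg']
    exact div_nonpos_of_nonpos_of_nonneg
      (by linarith [mul_sin_le_mul_sin hy.1.le hy.2.le (by linarith [pi_pos])]) ha0.le
  have hmono : MonotoneOn g (Set.Ici a) := by
    refine monotoneOn_of_deriv_nonneg (convex_Ici a) hcont.continuousOn
      (fun y _ => (hg y).differentiableAt.differentiableWithinAt) fun y hy => ?_
    rw [interior_Ici] at hy
    rw [(hg y).deriv, hg']
    exact div_nonneg (by linarith [mul_sin_le_mul_sin_of_le ha0.le ha hy.le]) ha0.le
  have hmin : g a ≤ g |s| := by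
    rcases le_total |s| a with h | h
    · exact hanti ⟨abs_nonneg s, h⟩ ⟨ha0.le, le_rfl⟩ h
    · exact hmono Set.self_mem_Ici h h
  simp only [g, cos_abs, sq_abs] at hmin
  linarith

theorem cos_le_sum_mul_cos {ι : Type*} (s : Finset ι) {p y : ι → ℝ} {a : ℝ}
    (hp : ∀ j ∈ s, 0 ≤ p j) (hp1 : ∑ j ∈ s, p j = 1) (hy : ∑ j ∈ s, p j * y j ^ 2 ≤ a ^ 2)
    (ha0 : 0 ≤ a) (ha : a ≤ π / 2) :
    cos a ≤ ∑ j ∈ s, p j * cos (y j) := by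
  rcases ha0.eq_or_lt with rfl | ha0
  · have hzero : ∀ j ∈ s, p j * y j ^ 2 = 0 :=
      (Finset.sum_eq_zero_iff_of_nonneg fun j hj => mul_nonneg (hp j hj) (sq_nonneg _)).mp
        (le_antisymm (by simpa using hy) (Finset.sum_nonneg fun j hj =>
          mul_nonneg (hp j hj) (sq_nonneg _)))
    rw [cos_zero, ← hp1]
    refine (Finset.sum_congr rfl fun j hj => ?_).le
    rcases mul_eq_zero.mp (hzero j hj) with h | h
    · simp [h]
    · simp [pow_eq_zero_iff two_ne_zero |>.mp h]
  set k := sin a / (2 * a)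
  have hk : 0 ≤ k := div_nonneg (sin_nonneg_of_nonneg_of_le_pi ha0.le (by linarith [pi_pos]))
    (by linarith)
  calc cos a ≤ cos a - k * (∑ j ∈ s, p j * y j ^ 2 - a ^ 2) :=
        le_sub_self_iff _ |>.mpr (mul_nonpos_of_nonneg_of_nonpos hk (by linarith))
    _ = ∑ j ∈ s, ((cos a + k * a ^ 2) * p j - k * (p j * y j ^ 2)) := by
        rw [Finset.sum_sub_distrib, ← Finset.mul_sum, ← Finset.mul_sum, hp1]
        ring
    _ = ∑ j ∈ s, p j * (cos a - k * (y j ^ 2 - a ^ 2)) :=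
        Finset.sum_congr rfl fun j _ => by ring
    _ ≤ ∑ j ∈ s, p j * cos (y j) := Finset.sum_le_sum fun j hj =>
        mul_le_mul_of_nonneg_left (cos_sub_mul_sq_sub_sq_le_cos ha0 ha (y j)) (hp j hj)

end Real

namespace Matrix

variable {n : Type*} [Fintype n]

theorem IsHermitian.re_mul_self_apply_self_eq_sum_normSq {H : Matrix n n ℂ} (hH : H.IsHermitian)
    (v : n) : ((H * H) v v).re = ∑ k, Complex.normSq (H v k) := by
  rw [mul_apply, Complex.re_sum]
  refine Finset.sum_congr rfl fun k _ => ?_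
  rw [← hH.apply k v, Complex.star_def, Complex.mul_conj, Complex.ofReal_re]

variable [DecidableEq n]

theorem mul_diagonal_mul_star_apply_self (U : Matrix n n ℂ) (d : n → ℂ) (v : n) :
    (U * diagonal d * star U) v v = ∑ j, (Complex.normSq (U v j) : ℂ) * d j := by
  simp only [mul_apply, diagonal_apply, star_apply, mul_ite, mul_zero, Finset.sum_ite_eq',
    Finset.mem_univ, if_true, ← Complex.mul_conj, Complex.star_def]
  exact Finset.sum_congr rfl fun j _ => by ring

namespace IsHermitian

variable {H : Matrix n n ℂ} (hH : H.IsHermitian)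

/-- `spectralWeight v` is the spectral measure of the basis vector `v`: the weight
`|⟨uⱼ, v⟩|²` it puts on the `j`-th eigenvector `uⱼ` of `H`. -/
noncomputable def spectralWeight (v j : n) : ℝ :=
  Complex.normSq ((hH.eigenvectorUnitary : Matrix n n ℂ) v j)

theorem spectralWeight_nonneg (v j : n) : 0 ≤ hH.spectralWeight v j :=
  Complex.normSq_nonneg _

theorem conj_diagonal_apply_self (d : n → ℂ) (v : n) :
    ((hH.eigenvectorUnitary : Matrix n n ℂ) * diagonal d *
        star (hH.eigenvectorUnitary : Matrix n n ℂ)) v v =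
      ∑ j, (hH.spectralWeight v j : ℂ) * d j :=
  mul_diagonal_mul_star_apply_self _ d v

theorem sum_spectralWeight (v : n) : ∑ j, hH.spectralWeight v j = 1 := by
  have h := hH.conj_diagonal_apply_self (fun _ => 1) v
  rw [diagonal_one, Matrix.mul_one, mem_unitaryGroup_iff.mp hH.eigenvectorUnitary.2,
    one_apply_eq] at h
  exact_mod_cast (by simpa using h.symm : ∑ j, (hH.spectralWeight v j : ℂ) = 1)

theorem eq_conj_diagonal : H = (hH.eigenvectorUnitary : Matrix n n ℂ) *
    diagonal (fun j => (hH.eigenvalues j : ℂ)) * star (hH.eigenvectorUnitary : Matrix n n ℂ) :=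
  hH.spectral_theorem

theorem re_apply_self_eq_sum (v : n) :
    (H v v).re = ∑ j, hH.spectralWeight v j * hH.eigenvalues j := by
  conv_lhs => rw [hH.eq_conj_diagonal]
  rw [hH.conj_diagonal_apply_self, Complex.re_sum]
  simp only [← Complex.ofReal_mul, Complex.ofReal_re]

theorem re_mul_self_apply_self_eq_sum (v : n) :
    ((H * H) v v).re = ∑ j, hH.spectralWeight v j * hH.eigenvalues j ^ 2 := by
  set U : Matrix n n ℂ := ↑hH.eigenvectorUnitary
  have h : H * H = U * diagonal (fun j => (hH.eigenvalues j : ℂ) ^ 2) * star U := by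
    conv_lhs => rw [hH.eq_conj_diagonal]
    simp only [U, Matrix.mul_assoc]
    rw [← Matrix.mul_assoc (star _), UnitaryGroup.star_mul_self, Matrix.one_mul,
      ← Matrix.mul_assoc (diagonal _), diagonal_mul_diagonal]
    simp only [sq]
  rw [h, hH.conj_diagonal_apply_self, Complex.re_sum]
  simp only [← Complex.ofReal_pow, ← Complex.ofReal_mul, Complex.ofReal_re]

theorem exp_smul_apply_self (c : ℂ) (v : n) :
    NormedSpace.exp (c • H) v v =
      ∑ j, (hH.spectralWeight v j : ℂ) * Complex.exp (c * hH.eigenvalues j) := by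
  set U : Matrix n n ℂ := ↑hH.eigenvectorUnitary
  have hinv : U⁻¹ = star U := inv_eq_left_inv (UnitaryGroup.star_mul_self _)
  have h : c • H = U * diagonal (fun j => c * hH.eigenvalues j) * U⁻¹ := by
    conv_lhs => rw [hH.eq_conj_diagonal]
    have hd : diagonal (fun j => c * hH.eigenvalues j) =
        c • diagonal (fun j => (hH.eigenvalues j : ℂ)) := by
      rw [← diagonal_smul]; rfl
    rw [hinv, hd, Matrix.mul_smul, Matrix.smul_mul]
  rw [h, exp_conj _ _ Unitary.isUnit_coe, exp_diagonal, hinv, Pi.exp_def,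
    hH.conj_diagonal_apply_self, Complex.exp_eq_exp_ℂ]

end IsHermitian

end Matrix

namespace IsChiralHamiltonian

variable {V : Type*} [Fintype V] [DecidableEq V] {G : SimpleGraph V} [DecidableRel G.Adj]
  {H : Matrix V V ℂ}

theorem sum_normSq_apply (hH : IsChiralHamiltonian G H) (v : V) :
    ∑ k, Complex.normSq (H v k) = Complex.normSq (H v v) + G.degree v := by
  have hterm : ∀ k, Complex.normSq (H v k) =
      (if v = k then Complex.normSq (H v v) else 0) + if G.Adj v k then 1 else 0 := by
    intro k
    rcases eq_or_ne v k with rfl | hvk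
    · simp
    by_cases hadj : G.Adj v k
    · simp [hvk, hadj, ← Complex.sq_norm, hH.2.1 v k hvk hadj]
    · simp [hvk, hadj, hH.2.2 v k hvk hadj]
  rw [Finset.sum_congr rfl fun k _ => hterm k, Finset.sum_add_distrib, Finset.sum_ite_eq,
    Finset.sum_boole, ← SimpleGraph.neighborFinset_eq_filter,
    SimpleGraph.card_neighborFinset_eq_degree, if_pos (Finset.mem_univ v)]

theorem sum_spectralWeight_mul_sq_sub (hH : IsChiralHamiltonian G H) (v : V) :
    ∑ j, hH.1.spectralWeight v j * (hH.1.eigenvalues j - (H v v).re) ^ 2 = G.degree v := by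
  set w := hH.1.spectralWeight v
  set m := (H v v).re
  have hmean : ∑ j, w j * hH.1.eigenvalues j = m := (hH.1.re_apply_self_eq_sum v).symm
  have hm : (m : ℂ) = H v v := hH.1.coe_re_apply_self v
  have hsecond : ∑ j, w j * hH.1.eigenvalues j ^ 2 = m ^ 2 + G.degree v := by
    rw [← hH.1.re_mul_self_apply_self_eq_sum, hH.1.re_mul_self_apply_self_eq_sum_normSq,
      hH.sum_normSq_apply, ← hm, Complex.normSq_ofReal, sq]
  calc ∑ j, w j * (hH.1.eigenvalues j - m) ^ 2
      = ∑ j, w j * hH.1.eigenvalues j ^ 2 - 2 * m * ∑ j, w j * hH.1.eigenvalues j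
          + m ^ 2 * ∑ j, w j := by
        simp only [Finset.mul_sum, ← Finset.sum_sub_distrib, ← Finset.sum_add_distrib]
        exact Finset.sum_congr rfl fun j _ => by ring
    _ = G.degree v := by
        rw [hsecond, hmean, hH.1.sum_spectralWeight]
        ring

theorem cos_le_re_exp_apply_self (hH : IsChiralHamiltonian G H) (v : V) {t : ℝ} (ht : 0 ≤ t)
    (htv : Real.sqrt (G.degree v) * t ≤ Real.pi / 2) :
    Real.cos (Real.sqrt (G.degree v) * t) ≤
      (Complex.exp (((H v v).re * t : ℝ) * Complex.I) *
        NormedSpace.exp ((-(t : ℂ) * Complex.I) • H) v v).re := by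
  set m := (H v v).re
  have hterm : ∀ j, (Complex.exp ((m * t : ℝ) * Complex.I) * ((hH.1.spectralWeight v j : ℂ) *
      Complex.exp (-(t : ℂ) * Complex.I * hH.1.eigenvalues j))).re =
      hH.1.spectralWeight v j * Real.cos (t * (m - hH.1.eigenvalues j)) := by
    intro j
    rw [mul_left_comm, ← Complex.exp_add, ← Complex.exp_ofReal_mul_I_re,
      ← Complex.re_ofReal_mul]
    push_cast
    ring_nf
  rw [hH.1.exp_smul_apply_self, Finset.mul_sum, Complex.re_sum,
    Finset.sum_congr rfl fun j _ => hterm j]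
  refine Real.cos_le_sum_mul_cos _ (fun j _ => hH.1.spectralWeight_nonneg v j)
    (hH.1.sum_spectralWeight v) (le_of_eq ?_) (by positivity) htv
  calc ∑ j, hH.1.spectralWeight v j * (t * (m - hH.1.eigenvalues j)) ^ 2
      = t ^ 2 * ∑ j, hH.1.spectralWeight v j * (hH.1.eigenvalues j - m) ^ 2 := by
        rw [Finset.mul_sum]
        exact Finset.sum_congr rfl fun j _ => by ring
    _ = (Real.sqrt (G.degree v) * t) ^ 2 := by
        rw [hH.sum_spectralWeight_mul_sq_sub, mul_pow, Real.sq_sqrt (Nat.cast_nonneg _)]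
        ring

theorem exp_apply_self_ne_zero (hH : IsChiralHamiltonian G H) (v : V) {t : ℝ} (ht : 0 ≤ t)
    (htv : Real.sqrt (G.degree v) * t < Real.pi / 2) :
    NormedSpace.exp ((-(t : ℂ) * Complex.I) • H) v v ≠ 0 := by
  intro h
  have hle := hH.cos_le_re_exp_apply_self v ht htv.le
  rw [h, mul_zero, Complex.zero_re] at hle
  have hpos : 0 < Real.cos (Real.sqrt (G.degree v) * t) := Real.cos_pos_of_mem_Ioo
    ⟨by linarith [Real.pi_pos, mul_nonneg (Real.sqrt_nonneg (G.degree v)) ht], htv⟩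
  exact hpos.not_ge hle

end IsChiralHamiltonian

theorem swift_stmt_4_general {V : Type*} [Fintype V] [DecidableEq V] (G : SimpleGraph V)
    [DecidableRel G.Adj] (v : V) (N : ℕ) (hdeg : G.degree v = N) (hN : 1 ≤ N)
    (Hs : Matrix V V ℂ)
    (hswift : ∀ t : ℝ, 0 ≤ t →
      ‖(NormedSpace.exp ((-(t : ℂ) * Complex.I) • Hs)) v v‖ ^ 2 =
        Real.cos (Real.sqrt N * t) ^ 2) :
    (NormedSpace.exp ((-(((Real.pi / (2 * Real.sqrt N)) : ℝ) : ℂ) * Complex.I) • Hs))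
        v v = 0 ∧
      ∀ (H : Matrix V V ℂ), IsChiralHamiltonian G H →
        ∀ t : ℝ, 0 < t → t < Real.pi / (2 * Real.sqrt N) →
          (NormedSpace.exp ((-(t : ℂ) * Complex.I) • H)) v v ≠ 0 := by
  have hsqrt : 0 < Real.sqrt N := Real.sqrt_pos.mpr (by exact_mod_cast hN)
  refine ⟨?_, fun H hH t ht htN => ?_⟩
  · have harg : Real.sqrt N * (Real.pi / (2 * Real.sqrt N)) = Real.pi / 2 := by
      field_simp
    have h := hswift (Real.pi / (2 * Real.sqrt N)) (by positivity)
    rw [harg, Real.cos_pi_div_two] at h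
    simpa using h
  · subst hdeg
    refine hH.exp_apply_self_ne_zero v ht.le ?_
    have := (lt_div_iff₀ (by positivity)).mp htN
    linarith

/-- A swift chiral quantum walk (when it exists) is the fastest at leaving its starting
vertex `v` of degree `N`: it reaches a state orthogonal to `v` at time `τ_s = π/(2√N)`,
and no chiral Hamiltonian on `G` can evolve the state localized at `v` to a state
orthogonal to it in a strictly shorter time. -/
theorem swift_stmt_4 {V : Type*} [Fintype V] [DecidableEq V] (G : SimpleGraph V)
    [DecidableRel G.Adj] (v : V) (N : ℕ) (hdeg : G.degree v = N) (hN : 1 ≤ N)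
    (Hs : Matrix V V ℂ) (hHs : IsChiralHamiltonian G Hs)
    (hswift : ∀ t : ℝ, 0 ≤ t →
      ‖(NormedSpace.exp ((-(t : ℂ) * Complex.I) • Hs)) v v‖ ^ 2 =
        Real.cos (Real.sqrt N * t) ^ 2) :
    (NormedSpace.exp ((-(((Real.pi / (2 * Real.sqrt N)) : ℝ) : ℂ) * Complex.I) • Hs))
        v v = 0 ∧
      ∀ (H : Matrix V V ℂ), IsChiralHamiltonian G H →
        ∀ t : ℝ, 0 < t → t < Real.pi / (2 * Real.sqrt N) →
          (NormedSpace.exp ((-(t : ℂ) * Complex.I) • H)) v v ≠ 0 :=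
  swift_stmt_4_general G v N hdeg hN Hs hswift
end

section
/- Let G' be a finite simple graph in which every vertex has even degree. Then G' admits a swift phases configuration; moreover, one can choose the chiral adjacency matrix Ã so that every nonzero entry of Ã lies in {i, −i}. -/
/-!
Put `Ã j k = i` if the edge `jk` is oriented from `j` to `k` and `Ã j k = -i` if it is oriented
from `k` to `j`. This `Ã` is Hermitian, and its row sums vanish exactly when every vertex has as
many outgoing as incoming edges. Such a balanced orientation exists when all degrees are even:
a finite graph with an edge and no vertex of degree one is not a forest (the end of a longest
path would be a leaf), so it has a cycle; orienting the cycle along itself balances every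
vertex, and deleting its edges keeps all degrees even, so induction on the number of edges
finishes the proof.
-/

open Matrix

open Finset

namespace SimpleGraph

variable {V : Type*} {G : SimpleGraph V}

namespace Walk

variable [DecidableEq V]

def netFlow {u v : V} (p : G.Walk u v) (j k : V) : ℤ :=
  (p.darts.countP (·.toProd = (j, k)) : ℤ) - p.darts.countP (·.toProd = (k, j))

lemma netFlow_swap {u v : V} (p : G.Walk u v) (j k : V) : p.netFlow k j = -p.netFlow j k := by
  simp only [netFlow]
  ring

lemma netFlow_cons {u w v : V} (h : G.Adj u w) (p : G.Walk w v) (j k : V) :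
    (cons h p).netFlow j k = p.netFlow j k +
      ((if (u, w) = (j, k) then 1 else 0) - (if (u, w) = (k, j) then 1 else 0)) := by
  simp only [netFlow, darts_cons, List.countP_cons, decide_eq_true_eq]
  push_cast
  ring

lemma sum_netFlow [Fintype V] {u v : V} (p : G.Walk u v) (j : V) :
    ∑ k, p.netFlow j k = (if j = u then 1 else 0) - (if j = v then 1 else 0) := by
  induction p with
  | nil => simp [netFlow]
  | cons h p ih =>
    simp only [netFlow_cons, sum_add_distrib, ih, sum_sub_distrib, Prod.mk.injEq, ite_and]
    simp [eq_comm]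

lemma count_edges_eq_countP_darts {u v : V} (p : G.Walk u v) (j k : V) :
    p.edges.count s(j, k) =
      p.darts.countP (·.toProd = (j, k)) + p.darts.countP (·.toProd = (k, j)) := by
  induction p with
  | nil => simp
  | cons h p ih =>
    simp only [edges_cons, darts_cons, List.count_cons, List.countP_cons, ih, beq_iff_eq,
      Sym2.eq_iff, decide_eq_true_eq, Prod.mk.injEq]
    have := h.ne
    grind

lemma netFlow_eq_zero_of_notMem_edges {u v : V} (p : G.Walk u v) {j k : V}
    (h : s(j, k) ∉ p.edges) : p.netFlow j k = 0 := by
  have := p.count_edges_eq_countP_darts j k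
  rw [List.count_eq_zero_of_not_mem h] at this
  simp only [netFlow]
  omega

lemma IsTrail.netFlow_eq_one_or_neg_one {u v : V} {p : G.Walk u v} (hp : p.IsTrail) {j k : V}
    (h : s(j, k) ∈ p.edges) : p.netFlow j k = 1 ∨ p.netFlow j k = -1 := by
  have := p.count_edges_eq_countP_darts j k
  rw [List.count_eq_one_of_mem hp.edges_nodup h] at this
  simp only [netFlow]
  omega

end Walk

lemma IsAcyclic.exists_ncard_neighborSet_eq_one [Finite V] (hG : G.IsAcyclic) (hbot : G ≠ ⊥) :
    ∃ v, (G.neighborSet v).ncard = 1 := by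
  classical
  have := Fintype.ofFinite V
  obtain ⟨a, b, hab⟩ := ne_bot_iff_exists_adj.mp hbot
  have : Nonempty (Σ u v, G.Path u v) := ⟨⟨a, b, Path.singleton hab⟩⟩
  obtain ⟨⟨u, v, p⟩, hmax⟩ := Finite.exists_max fun p : Σ u v, G.Path u v => p.2.2.1.length
  have hp : ¬p.1.Nil := by
    rw [← Walk.length_eq_zero_iff]
    have := hmax ⟨a, b, Path.singleton hab⟩
    simp only [Path.singleton, Walk.length_cons, Walk.length_nil] at this
    omega
  refine ⟨v, ?_⟩
  suffices G.neighborSet v = {p.1.penultimate} by rw [this, Set.ncard_singleton]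
  ext w
  simp only [mem_neighborSet, Set.mem_singleton_iff]
  refine ⟨fun hw => ?_, fun hw => hw ▸ (p.1.adj_penultimate hp).symm⟩
  by_cases hws : w ∈ p.1.support
  · exact hG.eq_penultimate_of_adj_end p.2 hw hws
  · have := hmax ⟨u, w, p.1.concat hw, p.2.concat hws hw⟩
    simp at this

lemma exists_isCycle_of_even_ncard_neighborSet [Finite V] (hbot : G ≠ ⊥)
    (h : ∀ v, Even (G.neighborSet v).ncard) : ∃ (u : V) (c : G.Walk u u), c.IsCycle := by
  by_contra! hG
  obtain ⟨v, hv⟩ := IsAcyclic.exists_ncard_neighborSet_eq_one hG hbot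
  simpa [hv] using h v

lemma Walk.IsCycle.even_ncard_neighborSet_toSubgraph {u : V} {c : G.Walk u u} (hc : c.IsCycle)
    (v : V) : Even (c.toSubgraph.neighborSet v).ncard := by
  by_cases hv : v ∈ c.support
  · simp [hc.ncard_neighborSet_toSubgraph_eq_two hv]
  · have : c.toSubgraph.neighborSet v = ∅ :=
      Set.eq_empty_of_forall_notMem fun _ hw => hv (c.mem_support_of_adj_toSubgraph hw)
    simp [this]

lemma even_ncard_neighborSet_sdiff [Finite V] {H : SimpleGraph V} (hHG : H ≤ G) (v : V)
    (hG : Even (G.neighborSet v).ncard) (hH : Even (H.neighborSet v).ncard) :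
    Even ((G \ H).neighborSet v).ncard := by
  rw [neighborSet_sdiff, Set.ncard_sdiff (neighborSet_mono hHG v)]
  exact hG.tsub hH

/-- `f j k = 1` encodes the orientation `j → k` of the edge `jk`; the row sums vanish exactly
when every vertex has equal in- and out-degree. -/
structure IsBalancedOrientation [Fintype V] (G : SimpleGraph V) (f : V → V → ℤ) : Prop where
  swap : ∀ j k, f k j = -f j k
  of_adj : ∀ ⦃j k⦄, G.Adj j k → f j k = 1 ∨ f j k = -1
  of_not_adj : ∀ ⦃j k⦄, ¬G.Adj j k → f j k = 0
  sum_eq_zero : ∀ j, ∑ k, f j k = 0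

variable [Fintype V]

lemma isBalancedOrientation_bot : (⊥ : SimpleGraph V).IsBalancedOrientation 0 :=
  ⟨by simp, by simp, by simp, by simp⟩

lemma IsBalancedOrientation.sup {G₁ G₂ : SimpleGraph V} {f g : V → V → ℤ}
    (hf : G₁.IsBalancedOrientation f) (hg : G₂.IsBalancedOrientation g) (h : Disjoint G₁ G₂) :
    (G₁ ⊔ G₂).IsBalancedOrientation (f + g) where
  swap j k := by simp [hf.swap j k, hg.swap j k, add_comm]
  of_adj j k hjk := by
    rcases hjk with h₁ | h₂
    · simpa [hg.of_not_adj (disjoint_left.mp h j k h₁)] using hf.of_adj h₁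
    · simpa [hf.of_not_adj (disjoint_left.mp h.symm j k h₂)] using hg.of_adj h₂
  of_not_adj j k hjk := by
    simp only [sup_adj, not_or] at hjk
    simp [hf.of_not_adj hjk.1, hg.of_not_adj hjk.2]
  sum_eq_zero j := by simp [sum_add_distrib, hf.sum_eq_zero j, hg.sum_eq_zero j]

lemma Walk.IsTrail.isBalancedOrientation_netFlow [DecidableEq V] {u : V} {c : G.Walk u u}
    (hc : c.IsTrail) : c.toSubgraph.spanningCoe.IsBalancedOrientation c.netFlow where
  swap := c.netFlow_swap
  of_adj j k hjk := hc.netFlow_eq_one_or_neg_one (adj_toSubgraph_iff_mem_edges.mp hjk)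
  of_not_adj j k hjk :=
    c.netFlow_eq_zero_of_notMem_edges (mt adj_toSubgraph_iff_mem_edges.mpr hjk)
  sum_eq_zero j := by simp [c.sum_netFlow]

theorem exists_isBalancedOrientation (G : SimpleGraph V)
    (h : ∀ v, Even (G.neighborSet v).ncard) : ∃ f, G.IsBalancedOrientation f := by
  classical
  induction hn : G.edgeSet.ncard using Nat.strong_induction_on generalizing G with
  | _ n ih =>
  by_cases hbot : G = ⊥
  · exact ⟨0, hbot ▸ isBalancedOrientation_bot⟩
  obtain ⟨u, c, hc⟩ := exists_isCycle_of_even_ncard_neighborSet hbot h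
  set H := c.toSubgraph.spanningCoe
  have hHG : H ≤ G := c.toSubgraph.spanningCoe_le
  have hH : H ≠ ⊥ := ne_bot_iff_exists_adj.mpr ⟨u, c.snd, c.toSubgraph_adj_snd hc.not_nil⟩
  have hlt : (G \ H).edgeSet.ncard < n :=
    hn ▸ Set.ncard_lt_ncard (edgeSet_ssubset_edgeSet.mpr (sdiff_lt hHG hH))
  obtain ⟨g, hg⟩ := ih _ hlt (G \ H) (fun v => even_ncard_neighborSet_sdiff hHG v (h v)
    (hc.even_ncard_neighborSet_toSubgraph v)) rfl
  have hsup := hc.isTrail.isBalancedOrientation_netFlow.sup hg disjoint_sdiff_self_right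
  rw [sup_sdiff_cancel_right hHG] at hsup
  exact ⟨_, hsup⟩

end SimpleGraph

theorem swift_stmt_7_general {V : Type*} [Fintype V] (G' : SimpleGraph V)
    [DecidableRel G'.Adj] (heven : ∀ v : V, Even (G'.degree v)) :
    ∃ A : Matrix V V ℂ, IsChiralAdjacency G' A ∧ A *ᵥ (fun _ => 1) = 0 ∧
      ∀ j k, A j k ≠ 0 → A j k = Complex.I ∨ A j k = -Complex.I := by
  have hncard (v : V) : (G'.neighborSet v).ncard = G'.degree v := by
    rw [Set.ncard_eq_toFinset_card', ← SimpleGraph.card_neighborFinset_eq_degree]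
    rfl
  obtain ⟨f, hf⟩ := G'.exists_isBalancedOrientation fun v => hncard v ▸ heven v
  refine ⟨of fun j k => f j k * Complex.I, ⟨?_, fun j k hjk => ?_, fun j k hjk => ?_⟩, ?_,
    fun j k hjk => ?_⟩
  · ext j k
    simp [hf.swap j k]
  · rcases hf.of_adj hjk with h | h <;> simp [h]
  · simp [hf.of_not_adj hjk]
  · ext j
    simp [mulVec, dotProduct, ← sum_mul, ← Int.cast_sum, hf.sum_eq_zero j]
  · by_cases hadj : G'.Adj j k
    · rcases hf.of_adj hadj with h | h <;> simp [h]
    · simp [hf.of_not_adj hadj] at hjk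

/-- If every vertex of a finite simple graph `G'` has even degree, then `G'` admits a
swift phases configuration, and one can moreover choose all the nonzero entries of the
chiral adjacency matrix in `{i, -i}`. -/
theorem swift_stmt_7 {V : Type*} [Fintype V] [DecidableEq V] (G' : SimpleGraph V)
    [DecidableRel G'.Adj] (heven : ∀ v : V, Even (G'.degree v)) :
    ∃ A : Matrix V V ℂ, IsChiralAdjacency G' A ∧ A *ᵥ (fun _ => 1) = 0 ∧
      ∀ j k, A j k ≠ 0 → A j k = Complex.I ∨ A j k = -Complex.I :=
  swift_stmt_7_general G' heven
end

section
/- Let G' be a 3-regular finite simple graph. Then G' admits a swift phases configuration if and only if G' has a perfect matching. -/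
open Matrix

/-!
Three unit complex numbers with zero sum are the vertices of an equilateral triangle, so their
real parts `x, y, z` satisfy `x + y + z = 0` and `x² + y² + z² = 3/2`, and exactly one of them
lies in `{-1} ∪ (1/2, 1]`. Reading each row of a swift phases configuration this way selects one
neighbour per vertex, symmetrically because `A` is Hermitian: a perfect matching.

Conversely, deleting a perfect matching `M` leaves a `2`-regular graph. By Hall's theorem every
vertex `v` can be given its own incident edge `{v, σ v}`; this orients every cycle, and `σ` is a
permutation. Putting `-1` on `M` and `e^{± iπ/3}` on the arcs `v → σ v` gives row sums
`e^{iπ/3} + e^{-iπ/3} - 1 = 0`.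
-/

open Finset SimpleGraph

def IsMatchedPhase (z : ℂ) : Prop := z.re = -1 ∨ 1 / 2 < z.re

noncomputable instance : DecidablePred IsMatchedPhase :=
  fun _ => inferInstanceAs (Decidable (_ ∨ _))

section UnitTriple

variable {a b c : ℂ}

theorem re_sq_add_re_sq_add_re_sq_eq (ha : ‖a‖ = 1) (hb : ‖b‖ = 1)
    (hc : ‖c‖ = 1) (h : a + b + c = 0) :
    a.re ^ 2 + b.re ^ 2 + c.re ^ 2 = 3 / 2 := by
  have hconj : ∀ z : ℂ, ‖z‖ = 1 → z * star z = 1 := fun z hz => by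
    rw [Complex.star_def, Complex.mul_conj, Complex.normSq_eq_norm_sq, hz]; norm_num
  have hsq_re : ∀ z : ℂ, ‖z‖ = 1 → (z ^ 2).re = 2 * z.re ^ 2 - 1 := fun z hz => by
    have := Complex.normSq_eq_norm_sq z
    rw [hz, Complex.normSq_apply] at this
    simp only [pow_two, Complex.mul_re]
    linarith
  have hstar : star a + star b + star c = 0 := by simpa using congrArg star h
  -- `star z = z⁻¹` on the unit circle turns `a + b + c = 0` into `ab + bc + ca = 0`.
  have hsq : a ^ 2 + b ^ 2 + c ^ 2 = 0 := by
    linear_combination (a + b + c) * h - 2 * (a * b * c) * hstar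
      + 2 * a * b * hconj c hc + 2 * b * c * hconj a ha + 2 * c * a * hconj b hb
  have := congrArg Complex.re hsq
  simp only [Complex.add_re, Complex.zero_re, hsq_re a ha, hsq_re b hb, hsq_re c hc] at this
  linarith

theorem not_isMatchedPhase_and_isMatchedPhase (ha : ‖a‖ = 1) (hb : ‖b‖ = 1)
    (hc : ‖c‖ = 1) (h : a + b + c = 0) :
    ¬ (IsMatchedPhase a ∧ IsMatchedPhase b) := by
  have hs : a.re + b.re + c.re = 0 := by simpa using congrArg Complex.re h
  have hq := re_sq_add_re_sq_add_re_sq_eq ha hb hc h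
  have hcre := abs_le.1 (hc ▸ Complex.abs_re_le_norm c)
  rintro ⟨ha' | ha', hb' | hb'⟩ <;> nlinarith

theorem isMatchedPhase_or_isMatchedPhase_or_isMatchedPhase (ha : ‖a‖ = 1) (hb : ‖b‖ = 1)
    (hc : ‖c‖ = 1) (h : a + b + c = 0) :
    IsMatchedPhase a ∨ IsMatchedPhase b ∨ IsMatchedPhase c := by
  have hs : a.re + b.re + c.re = 0 := by simpa using congrArg Complex.re h
  have hq := re_sq_add_re_sq_add_re_sq_eq ha hb hc h
  have hare := abs_le.1 (ha ▸ Complex.abs_re_le_norm a)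
  have hbre := abs_le.1 (hb ▸ Complex.abs_re_le_norm b)
  have hcre := abs_le.1 (hc ▸ Complex.abs_re_le_norm c)
  by_contra! hne
  simp only [IsMatchedPhase, not_or, not_lt] at hne
  obtain ⟨⟨ha1, ha2⟩, ⟨hb1, hb2⟩, ⟨hc1, hc2⟩⟩ := hne
  have ha1 := lt_of_le_of_ne hare.1 (Ne.symm ha1)
  have hb1 := lt_of_le_of_ne hbre.1 (Ne.symm hb1)
  have hc1 := lt_of_le_of_ne hcre.1 (Ne.symm hc1)
  -- On `(-1, 1/2]³` the plane `x + y + z = 0` misses the sphere `x² + y² + z² = 3/2`: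
  -- there the maximum `3/2` is attained only at the permutations of `(1/2, 1/2, -1)`.
  nlinarith [mul_pos (sub_pos.2 ha1) (sub_pos.2 hb1),
    mul_nonneg (sub_nonneg.2 ha2) (sub_nonneg.2 hb2)]

end UnitTriple

theorem card_filter_isMatchedPhase {ι : Type*} [DecidableEq ι] {s : Finset ι} (hs : #s = 3)
    {g : ι → ℂ} (hg : ∀ i ∈ s, ‖g i‖ = 1) (hsum : ∑ i ∈ s, g i = 0) :
    #{i ∈ s | IsMatchedPhase (g i)} = 1 := by
  obtain ⟨a, b, c, hab, hac, hbc, rfl⟩ := card_eq_three.1 hs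
  simp only [mem_insert, mem_singleton, forall_eq_or_imp, forall_eq] at hg
  obtain ⟨ha, hb, hc⟩ := hg
  rw [sum_insert (by simp [hab, hac]), sum_insert (by simp [hbc]), sum_singleton,
    ← add_assoc] at hsum
  have hab' := not_isMatchedPhase_and_isMatchedPhase ha hb hc hsum
  have hac' := not_isMatchedPhase_and_isMatchedPhase ha hc hb (by linear_combination hsum)
  have hbc' := not_isMatchedPhase_and_isMatchedPhase hb hc ha (by linear_combination hsum)
  have := isMatchedPhase_or_isMatchedPhase_or_isMatchedPhase ha hb hc hsum
  rw [filter_insert, filter_insert, filter_singleton]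
  by_cases hpa : IsMatchedPhase (g a) <;> by_cases hpb : IsMatchedPhase (g b) <;>
    by_cases hpc : IsMatchedPhase (g c) <;> simp_all

section MatchedPhase

variable {V : Type*} [Fintype V] {G : SimpleGraph V} [DecidableRel G.Adj]

theorem IsChiralAdjacency.sum_neighborFinset {A : Matrix V V ℂ} (hA : IsChiralAdjacency G A)
    (v : V) : ∑ w ∈ G.neighborFinset v, A v w = (A *ᵥ fun _ => 1) v := by
  simp only [mulVec, dotProduct, mul_one, neighborFinset_eq_filter]
  exact sum_filter_of_ne fun w _ hw => not_not.1 (mt (hA.2.2 v w) hw)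

def matchedPhaseSubgraph {A : Matrix V V ℂ} (hA : A.IsHermitian) : G.Subgraph where
  verts := Set.univ
  Adj v w := G.Adj v w ∧ IsMatchedPhase (A v w)
  adj_sub := And.left
  edge_vert _ := trivial
  symm := ⟨fun v w h => ⟨h.1.symm, by
    rw [← hA.apply w v]; simpa [IsMatchedPhase] using h.2⟩⟩

theorem IsChiralAdjacency.isPerfectMatching_matchedPhaseSubgraph [DecidableEq V]
    (hreg : G.IsRegularOfDegree 3) {A : Matrix V V ℂ} (hA : IsChiralAdjacency G A)
    (h0 : (A *ᵥ fun _ => 1) = 0) : (matchedPhaseSubgraph (G := G) hA.1).IsPerfectMatching := by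
  refine Subgraph.isPerfectMatching_iff.2 fun v => ?_
  obtain ⟨w, hw⟩ := card_eq_one.1 <| card_filter_isMatchedPhase (hreg v)
    (fun w hw => hA.2.1 v w ((mem_neighborFinset G v w).1 hw))
    ((hA.sum_neighborFinset v).trans (congrFun h0 v))
  have key : ∀ u, (matchedPhaseSubgraph (G := G) hA.1).Adj v u ↔ u = w := fun u => by
    simpa [matchedPhaseSubgraph] using (Finset.ext_iff.1 hw u)
  exact ⟨w, (key w).2 rfl, fun u hu => (key u).1 hu⟩

end MatchedPhase

namespace SimpleGraph
variable {V : Type*} [Fintype V] [DecidableEq V] {H : SimpleGraph V} [DecidableRel H.Adj]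

theorem exists_injective_mem_incidenceFinset (h : ∀ v, 2 ≤ H.degree v) :
    ∃ f : V → Sym2 V, Function.Injective f ∧ ∀ v, f v ∈ H.incidenceFinset v := by
  refine (all_card_le_biUnion_card_iff_exists_injective _).1 fun s => ?_
  set t := s.biUnion fun v => H.incidenceFinset v
  -- Hall's condition by double counting the pairs `v ∈ e`, `v ∈ s`, `e ∈ t`:
  -- at least two per vertex, at most two per edge.
  have := card_mul_le_card_mul (fun v e => v ∈ e) (s := s) (t := t) (m := 2) (n := 2)
    (fun v hv => (h v).trans <| card_incidenceFinset_eq_degree H v ▸ card_le_card fun e he =>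
      (mem_bipartiteAbove _).2
        ⟨mem_biUnion.2 ⟨v, hv, he⟩, ((H.mem_incidenceFinset v e).1 he).2⟩)
    (fun e _ => (card_le_card fun v hv =>
      Sym2.mem_toFinset.2 ((mem_bipartiteBelow _).1 hv).2).trans <|
        (Sym2.card_toFinset e).trans_le <| by split_ifs <;> norm_num)
  omega

theorem IsRegularOfDegree.exists_adj_xor (h : H.IsRegularOfDegree 2) :
    ∃ σ : V → V, (∀ v, H.Adj v (σ v)) ∧
      ∀ j k, H.Adj j k → Xor (σ j = k) (σ k = j) := by
  obtain ⟨f, hinj, hf⟩ := exists_injective_mem_incidenceFinset fun v => (h v).ge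
  simp only [mem_incidenceFinset] at hf
  have hcard : #H.edgeFinset = #(univ.image f) := by
    have := H.sum_degrees_eq_twice_card_edges
    simp only [h.degree_eq, sum_const, card_univ, smul_eq_mul] at this
    rw [card_image_of_injective _ hinj, card_univ]
    omega
  have hsurj : ∀ e ∈ H.edgeSet, ∃ v, f v = e := fun e he => by
    have : univ.image f = H.edgeFinset := eq_of_subset_of_card_le
      (fun e he => by obtain ⟨v, -, rfl⟩ := mem_image.1 he; exact mem_edgeFinset.2 (hf v).1)
      hcard.le
    simpa [← this] using mem_edgeFinset.2 he
  let σ v := Sym2.Mem.other' (hf v).2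
  have hσ : ∀ v, f v = s(v, σ v) := fun v => (Sym2.other_spec' (hf v).2).symm
  refine ⟨σ, fun v => by simpa [hσ] using (hf v).1, fun j k hjk => ?_⟩
  rw [xor_iff_or_and_not_and]
  constructor
  · obtain ⟨v, hv⟩ := hsurj _ ((mem_edgeSet H).2 hjk)
    have hmem : v ∈ s(j, k) := hv ▸ (hf v).2
    rcases Sym2.mem_iff.1 hmem with rfl | rfl
    · exact Or.inl (Sym2.congr_right.1 (hσ v ▸ hv))
    · exact Or.inr (Sym2.congr_right.1 ((hσ v ▸ hv).trans Sym2.eq_swap))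
  · rintro ⟨hj, hk⟩
    refine hjk.ne (hinj ?_)
    rw [hσ, hσ, hj, hk, Sym2.eq_swap]

theorem IsRegularOfDegree.injective_of_adj_xor (h : H.IsRegularOfDegree 2) {σ : V → V}
    (hadj : ∀ v, H.Adj v (σ v)) (hxor : ∀ j k, H.Adj j k → Xor (σ j = k) (σ k = j)) :
    Function.Injective σ := by
  intro k k' hkk'
  by_contra hne
  set v := σ k
  obtain ⟨x, y, -, hxy⟩ := card_eq_two.1 (h v)
  have hmem : ∀ w, H.Adj v w → w = x ∨ w = y := fun w hw => by
    simpa [hxy] using (mem_neighborFinset H v w).2 hw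
  have hv : σ v = k ∨ σ v = k' := by
    have := hmem _ (hadj v)
    have := hmem k (hadj k).symm
    have := hmem k' (hkk' ▸ (hadj k').symm)
    grind
  rcases hv with hv | hv
  · exact (xor_iff_or_and_not_and _ _).1 (hxor k v (hadj k)) |>.2 ⟨rfl, hv⟩
  · exact (xor_iff_or_and_not_and _ _).1 (hxor k' v (hkk' ▸ hadj k')) |>.2 ⟨hkk'.symm, hv⟩

theorem IsRegularOfDegree.sdiff_spanningCoe {G : SimpleGraph V} [DecidableRel G.Adj] {k : ℕ}
    (hreg : G.IsRegularOfDegree (k + 1)) {M : G.Subgraph} (hM : M.IsPerfectMatching)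
    [DecidableRel (G \ M.spanningCoe).Adj] : (G \ M.spanningCoe).IsRegularOfDegree k := by
  intro v
  obtain ⟨p, hp, hpuniq⟩ := Subgraph.isPerfectMatching_iff.1 hM v
  have : (G \ M.spanningCoe).neighborFinset v = (G.neighborFinset v).erase p := by
    ext w
    simp only [mem_neighborFinset, sdiff_adj, Subgraph.spanningCoe_adj, mem_erase]
    exact ⟨fun h => ⟨fun hw => h.2 (hw ▸ hp), h.1⟩,
      fun h => ⟨h.2, fun hw => h.1 (hpuniq w hw)⟩⟩
  rw [← card_neighborFinset_eq_degree, this, card_erase_of_mem ((mem_neighborFinset _ _ _).2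
    (M.adj_sub hp)), card_neighborFinset_eq_degree, hreg v, Nat.add_sub_cancel]

end SimpleGraph

section PhaseMatrix

variable {V : Type*} [DecidableEq V] {G : SimpleGraph V}

open Classical in
noncomputable def phaseMatrix (M : G.Subgraph) (σ : Equiv.Perm V) (ζ : ℂ) : Matrix V V ℂ :=
  of fun j k =>
    (if σ j = k then ζ else 0) + (if σ k = j then star ζ else 0) - if M.Adj j k then 1 else 0

variable {M : G.Subgraph} {σ : Equiv.Perm V} {ζ : ℂ}

theorem isHermitian_phaseMatrix : (phaseMatrix M σ ζ).IsHermitian := by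
  classical
  ext j k
  simp only [conjTranspose_apply, phaseMatrix, of_apply, star_sub, star_add]
  simp only [apply_ite star, star_zero, star_one, star_star, add_comm]
  exact congrArg _ (if_congr (M.adj_comm k j) rfl rfl)

theorem mulVec_one_phaseMatrix [Fintype V] (hM : M.IsPerfectMatching) :
    (phaseMatrix M σ ζ *ᵥ fun _ => 1) = fun _ => ζ + star ζ - 1 := by
  classical
  funext j
  obtain ⟨p, hp, hpuniq⟩ := Subgraph.isPerfectMatching_iff.1 hM j
  have hM1 : ∑ k, (if M.Adj j k then (1 : ℂ) else 0) = 1 := by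
    rw [sum_eq_single p (fun k _ hk => if_neg (mt (hpuniq k) hk)) (by simp), if_pos hp]
  have hσ : ∑ k, (if σ k = j then star ζ else 0) = star ζ := by
    simp only [← σ.eq_symm_apply, sum_ite_eq', mem_univ, if_true]
  simp only [mulVec, dotProduct, mul_one, phaseMatrix, of_apply, sum_sub_distrib, sum_add_distrib,
    sum_ite_eq, mem_univ, if_true, hσ, hM1]

theorem isChiralAdjacency_phaseMatrix (hσ : ∀ v, (G \ M.spanningCoe).Adj v (σ v))
    (hxor : ∀ j k, (G \ M.spanningCoe).Adj j k → Xor (σ j = k) (σ k = j))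
    (hζ : ‖ζ‖ = 1) :
    IsChiralAdjacency G (phaseMatrix M σ ζ) := by
  have hG : ∀ {j k}, σ j = k → G.Adj j k := fun h => h ▸ (hσ _).1
  have hM : ∀ {j k}, σ j = k → ¬ M.Adj j k := fun h => h ▸ (hσ _).2
  refine ⟨isHermitian_phaseMatrix, fun j k hjk => ?_, fun j k hjk => ?_⟩
  · by_cases hjkM : M.Adj j k
    · have h1 : σ j ≠ k := fun h => hM h hjkM
      have h2 : σ k ≠ j := fun h => hM h hjkM.symm
      simp [phaseMatrix, hjkM, h1, h2]
    · rcases hxor j k ⟨hjk, hjkM⟩ with ⟨h1, h2⟩ | ⟨h1, h2⟩ <;>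
        simp [phaseMatrix, hjkM, h1, h2, hζ]
  · have h1 : σ j ≠ k := fun h => hjk (hG h)
    have h2 : σ k ≠ j := fun h => hjk (hG h).symm
    have h3 : ¬ M.Adj j k := fun h => hjk (M.adj_sub h)
    simp [phaseMatrix, h1, h2, h3]

theorem SimpleGraph.Subgraph.IsPerfectMatching.exists_isChiralAdjacency_mulVec_eq_zero
    [Fintype V] [DecidableRel G.Adj] (hM : M.IsPerfectMatching) (hreg : G.IsRegularOfDegree 3) :
    ∃ A : Matrix V V ℂ, IsChiralAdjacency G A ∧ (A *ᵥ fun _ => 1) = 0 := by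
  classical
  have h2 := hreg.sdiff_spanningCoe hM
  obtain ⟨σ, hadj, hxor⟩ := h2.exists_adj_xor
  let τ := Equiv.ofBijective σ (h2.injective_of_adj_xor hadj hxor).bijective_of_finite
  obtain ⟨ζ, hζ, hζ_add⟩ : ∃ ζ : ℂ, ‖ζ‖ = 1 ∧ ζ + star ζ = 1 := by
    refine ⟨Complex.exp (↑(Real.pi / 3) * Complex.I), Complex.norm_exp_ofReal_mul_I _, ?_⟩
    rw [Complex.star_def, Complex.add_conj, Complex.exp_ofReal_mul_I_re, Real.cos_pi_div_three]
    norm_num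
  refine ⟨phaseMatrix M τ ζ, isChiralAdjacency_phaseMatrix hadj hxor hζ, ?_⟩
  rw [mulVec_one_phaseMatrix hM, hζ_add, sub_self]
  rfl

end PhaseMatrix

theorem swift_stmt_8_general {V : Type*} [Fintype V] (G' : SimpleGraph V)
    [DecidableRel G'.Adj] (hreg : G'.IsRegularOfDegree 3) :
    (∃ A : Matrix V V ℂ, IsChiralAdjacency G' A ∧ A *ᵥ (fun _ => 1) = 0) ↔
      ∃ M : G'.Subgraph, M.IsPerfectMatching := by
  classical
  constructor
  · rintro ⟨A, hA, h0⟩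
    exact ⟨_, hA.isPerfectMatching_matchedPhaseSubgraph hreg h0⟩
  · rintro ⟨M, hM⟩
    exact hM.exists_isChiralAdjacency_mulVec_eq_zero hreg

/-- A `3`-regular finite simple graph admits a swift phases configuration (a chiral
adjacency matrix annihilating the all-ones vector) if and only if it has a perfect
matching. -/
theorem swift_stmt_8 {V : Type*} [Fintype V] [DecidableEq V] (G' : SimpleGraph V)
    [DecidableRel G'.Adj] (hreg : G'.IsRegularOfDegree 3) :
    (∃ A : Matrix V V ℂ, IsChiralAdjacency G' A ∧ A *ᵥ (fun _ => 1) = 0) ↔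
      ∃ M : G'.Subgraph, M.IsPerfectMatching :=
  swift_stmt_8_general G' hreg
end

section
/- Let G' be a 3-regular finite simple graph that is Hamiltonian, i.e. it admits a Hamiltonian cycle (a cycle passing through every vertex exactly once). Then G' admits a swift phases configuration. -/
/-!
Orient a Hamiltonian cycle as a cyclic permutation `σ` of the vertices. Put the phase
`ω = e^{2πi/3}` on every edge `v → σ v`, its conjugate on the reversed edges, and `1` on the
remaining edges, which form a perfect matching because the graph is cubic. As the cycle has
length at least 3, no edge receives both `ω` and `ω̄`, so the matrix is Hermitian, and each
row sums to `ω + ω̄ + 1 = 0`.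
-/

open Matrix

namespace List

variable {α : Type*} [DecidableEq α]

theorem Nodup.rel_formPerm_apply {R : α → α → Prop} {l : List α} (hl : l.Nodup) (hne : l ≠ [])
    (hR : IsChain R (l.getLast hne :: l)) {x : α} (hx : x ∈ l) : R x (l.formPerm x) := by
  obtain ⟨i, hi, rfl⟩ := getElem_of_mem hx
  rw [formPerm_apply_getElem _ hl]
  rcases Nat.lt_or_ge (i + 1) l.length with h | h
  · simp only [Nat.mod_eq_of_lt h]
    exact hR.getElem (i + 1) (by simpa using h)
  · obtain rfl : i = l.length - 1 := by omega
    simp only [Nat.sub_add_cancel (length_pos_iff.2 hne), Nat.mod_self]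
    simpa [getLast_eq_getElem] using
      (isChain_cons.1 hR).1 l[0] (head?_eq_getElem? ▸ getElem?_eq_getElem _)

end List

theorem Equiv.Perm.IsCycleOn.apply_apply_ne {α : Type*} {f : Equiv.Perm α} {s : Finset α}
    (hf : f.IsCycleOn s) (hs : 2 < s.card) {a : α} (ha : a ∈ s) : f (f a) ≠ a := by
  rw [← Equiv.Perm.mul_apply, ← sq, Ne, hf.pow_apply_eq ha]
  exact fun h => (Nat.le_of_dvd two_pos h).not_gt hs

theorem Complex.exists_norm_eq_one_add_star_eq_neg_one : ∃ ω : ℂ, ‖ω‖ = 1 ∧ ω + star ω = -1 := by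
  refine ⟨⟨-1 / 2, √3 / 2⟩, ?_, Complex.ext (by norm_num) (by simp)⟩
  have h3 : √3 * √3 = 3 := Real.mul_self_sqrt (by norm_num)
  rw [Complex.norm_def, Complex.normSq_mk, Real.sqrt_eq_one]
  linear_combination h3 / 4

namespace SimpleGraph

variable {V : Type*} [DecidableEq V]

theorem IsHamiltonian.exists_isCycleOn_univ_adj [Fintype V] [Nontrivial V] {G : SimpleGraph V}
    (hG : G.IsHamiltonian) : ∃ σ : Equiv.Perm V, σ.IsCycleOn Set.univ ∧ ∀ v, G.Adj v (σ v) := by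
  obtain ⟨p, hp⟩ := hG.exists_isHamiltonianCycle (Classical.arbitrary V)
  have hcount := (Walk.isHamiltonianCycle_iff_isCycle_and_support_count_tail_eq_one.1 hp).2
  set l := p.support.tail
  have hmem (v : V) : v ∈ l := List.count_pos_iff.1 (by rw [hcount v]; exact one_pos)
  have hnodup : l.Nodup := List.nodup_iff_count_eq_one.2 fun v _ => hcount v
  have hne : l ≠ [] := List.ne_nil_of_mem (hmem (Classical.arbitrary V))
  refine ⟨l.formPerm, ?_, fun v => hnodup.rel_formPerm_apply hne ?_ (hmem v)⟩
  · convert hnodup.isCycleOn_formPerm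
    exact (Set.eq_univ_of_forall hmem).symm
  · rw [List.getLast_tail, p.getLast_support, p.cons_tail_support]
    exact p.isChain_adj_support

variable (G : SimpleGraph V) [DecidableRel G.Adj]

/-- The adjacency matrix with phase `ω` on the edges `v → σ v` and `ω̄` on their reversals. -/
def phasedAdjMatrix (σ : Equiv.Perm V) (ω : ℂ) : Matrix V V ℂ :=
  G.adjMatrix ℂ + (ω - 1) • σ.permMatrix ℂ + (star ω - 1) • σ⁻¹.permMatrix ℂ

variable {G} {σ : Equiv.Perm V} {ω : ℂ}

theorem isHermitian_phasedAdjMatrix : (G.phasedAdjMatrix σ ω).IsHermitian := by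
  simp only [phasedAdjMatrix, IsHermitian, conjTranspose_add, conjTranspose_smul,
    conjTranspose_permMatrix, inv_inv, (G.isHermitian_adjMatrix ℂ).eq, star_sub, star_star,
    star_one]
  abel

theorem phasedAdjMatrix_mulVec_one [Fintype V] (v : V) :
    (G.phasedAdjMatrix σ ω *ᵥ fun _ => 1) v = G.degree v + (ω - 1) + (star ω - 1) := by
  simp [phasedAdjMatrix, add_mulVec, smul_mulVec, permMatrix_mulVec]

theorem phasedAdjMatrix_apply (hadj : ∀ v, G.Adj v (σ v)) (hσ : ∀ v, σ (σ v) ≠ v) (v w : V) :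
    G.phasedAdjMatrix σ ω v w =
      if G.Adj v w then (if w = σ v then ω else if v = σ w then star ω else 1) else 0 := by
  simp only [phasedAdjMatrix, Matrix.add_apply, Matrix.smul_apply, smul_eq_mul,
    PEquiv.toMatrix_apply, Equiv.toPEquiv_apply, adjMatrix_apply, Option.mem_def,
    Option.some_inj, Equiv.Perm.inv_def, Equiv.symm_apply_eq]
  rcases eq_or_ne w (σ v) with rfl | hf
  · simp [hadj v, (hσ v).symm]
  rcases eq_or_ne v (σ w) with rfl | hb
  · simp [(hadj w).symm, hσ w, hf]
  · split_ifs <;> simp_all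

theorem isChiralAdjacency_phasedAdjMatrix (hω : ‖ω‖ = 1) (hadj : ∀ v, G.Adj v (σ v))
    (hσ : ∀ v, σ (σ v) ≠ v) : IsChiralAdjacency G (G.phasedAdjMatrix σ ω) := by
  refine ⟨isHermitian_phasedAdjMatrix, fun v w h => ?_, fun v w h => ?_⟩ <;>
    rw [phasedAdjMatrix_apply hadj hσ]
  · split_ifs <;> simp [hω]
  · simp [h]

theorem IsRegularOfDegree.exists_swiftPhases_of_perm [Fintype V] (hreg : G.IsRegularOfDegree 3)
    (hadj : ∀ v, G.Adj v (σ v)) (hσ : ∀ v, σ (σ v) ≠ v) :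
    ∃ A : Matrix V V ℂ, IsChiralAdjacency G A ∧ A *ᵥ (fun _ => 1) = 0 := by
  obtain ⟨ω, hω, hsum⟩ := Complex.exists_norm_eq_one_add_star_eq_neg_one
  refine ⟨G.phasedAdjMatrix σ ω, isChiralAdjacency_phasedAdjMatrix hω hadj hσ, funext fun v => ?_⟩
  rw [phasedAdjMatrix_mulVec_one, hreg v, Pi.zero_apply]
  push_cast
  linear_combination hsum

end SimpleGraph

/-- A Hamiltonian `3`-regular finite simple graph always admits a swift phases
configuration. -/
theorem swift_stmt_11 {V : Type*} [Fintype V] [DecidableEq V] (G' : SimpleGraph V)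
    [DecidableRel G'.Adj] (hreg : G'.IsRegularOfDegree 3)
    (hham : G'.IsHamiltonian) :
    ∃ A : Matrix V V ℂ, IsChiralAdjacency G' A ∧ A *ᵥ (fun _ => 1) = 0 := by
  obtain ⟨σ, hadj, hσ⟩ : ∃ σ : Equiv.Perm V, (∀ v, G'.Adj v (σ v)) ∧ ∀ v, σ (σ v) ≠ v := by
    rcases isEmpty_or_nonempty V with hV | hV
    · exact ⟨1, isEmptyElim, isEmptyElim⟩
    obtain ⟨v₀⟩ := hV
    have hcard : 3 < Fintype.card V := hreg v₀ ▸ G'.degree_lt_card_verts v₀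
    have : Nontrivial V := Fintype.one_lt_card_iff_nontrivial.1 (by omega)
    obtain ⟨σ, hcyc, hadj⟩ := hham.exists_isCycleOn_univ_adj
    rw [← Finset.coe_univ] at hcyc
    exact ⟨σ, hadj, fun v => hcyc.apply_apply_ne (by rw [Finset.card_univ]; omega)
      (Finset.mem_univ v)⟩
  exact hreg.exists_swiftPhases_of_perm hadj hσ
end

section
/- For every integer N ≥ 3, the complete graph K_N admits a swift phases configuration: there exists a Hermitian N×N matrix Ã with all diagonal entries zero, all off-diagonal entries of modulus 1, and Ã·1 = 0 for the all-ones vector 1. -/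
open Matrix

/-!
Let `ζ` be a primitive `2(N-1)`-th root of unity and take the circulant matrix generated by
`v 0 = 0`, `v k = ζ ^ (2k - 1)` for `0 < k < N`. Its entries off the diagonal are roots of unity.
It is Hermitian because `v (N - k) * v k = ζ ^ (2(N-1)) = 1`, i.e. `v (-k) = conj (v k)`. Every
row sums to `∑ v = ζ * ∑_{j < N-1} (ζ²) ^ j`, which vanishes as `ζ²` is a primitive `(N-1)`-th
root of unity and `N - 1 ≥ 2`.
-/

namespace Matrix

variable {n α : Type*}

theorem isHermitian_circulant [SubtractionMonoid n] [InvolutiveStar α] {v : n → α}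
    (hv : ∀ i, v (-i) = star (v i)) : (circulant v).IsHermitian := by
  rw [IsHermitian, conjTranspose_circulant]
  congr 1
  funext i
  simp [hv]

theorem circulant_mulVec_const_one [Fintype n] [AddGroup n] [NonAssocSemiring α] (v : n → α) :
    circulant v *ᵥ (fun _ => 1) = fun _ => ∑ i, v i := by
  funext i
  simp only [mulVec, dotProduct, circulant_apply, mul_one]
  exact Fintype.sum_equiv (Equiv.subLeft i) _ _ fun _ => rfl

end Matrix

def oddPowerPhases (z : ℂ) (m : ℕ) : Fin (m + 1) → ℂ :=
  fun k => if k = 0 then 0 else z ^ (2 * (k : ℕ) - 1)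

section oddPowerPhases

variable {z : ℂ} {m : ℕ}

theorem norm_oddPowerPhases (hz : ‖z‖ = 1) {k : Fin (m + 1)} (hk : k ≠ 0) :
    ‖oddPowerPhases z m k‖ = 1 := by
  simp [oddPowerPhases, hk, hz]

theorem oddPowerPhases_neg (hz : ‖z‖ = 1) (hzm : z ^ (2 * m) = 1) (k : Fin (m + 1)) :
    oddPowerPhases z m (-k) = star (oddPowerPhases z m k) := by
  by_cases hk : k = 0
  · simp [oddPowerPhases, hk]
  have hk' : (k : ℕ) ≠ 0 := Fin.val_ne_zero_iff.2 hk
  have hneg : ((-k : Fin (m + 1)) : ℕ) = m + 1 - k := by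
    rw [Fin.val_neg', Nat.mod_eq_of_lt (by omega)]
  have hprod : z ^ (2 * (m + 1 - k) - 1) * z ^ (2 * (k : ℕ) - 1) = 1 := by
    rw [← pow_add, ← hzm]
    congr 1
    omega
  simp only [oddPowerPhases, neg_eq_zero, hk, if_false, hneg]
  rw [eq_inv_of_mul_eq_one_left hprod, Complex.inv_eq_conj (by simp [hz])]
  rfl

theorem sum_oddPowerPhases (hz : IsPrimitiveRoot z (2 * m)) (hm : 1 < m) :
    ∑ k, oddPowerPhases z m k = 0 := by
  have hsq : IsPrimitiveRoot (z ^ 2) m := hz.pow (by omega) rfl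
  have hsucc (i : Fin m) : oddPowerPhases z m i.succ = z * (z ^ 2) ^ (i : ℕ) := by
    simp only [oddPowerPhases, Fin.succ_ne_zero, if_false, Fin.val_succ, ← pow_mul, ← pow_succ']
    rw [show 2 * ((i : ℕ) + 1) - 1 = 2 * i + 1 by omega]
  rw [Fin.sum_univ_succ, Finset.sum_congr rfl fun i _ => hsucc i,
    Fin.sum_univ_eq_sum_range (fun i => z * (z ^ 2) ^ i), ← Finset.mul_sum,
    hsq.geom_sum_eq_zero hm]
  simp [oddPowerPhases]

end oddPowerPhases

/-- For every `N ≥ 3`, the complete graph `K_N` admits a swift phases configuration: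
a Hermitian `N × N` matrix with zero diagonal, all off-diagonal entries of modulus `1`,
annihilating the all-ones vector. -/
theorem swift_stmt_12 (N : ℕ) (hN : 3 ≤ N) :
    ∃ A : Matrix (Fin N) (Fin N) ℂ, A.IsHermitian ∧ (∀ i, A i i = 0) ∧
      (∀ i j, i ≠ j → ‖A i j‖ = 1) ∧ A *ᵥ (fun _ => 1) = 0 := by
  obtain ⟨m, rfl⟩ : ∃ m, N = m + 1 := ⟨N - 1, by omega⟩
  have hz := Complex.isPrimitiveRoot_exp (2 * m) (by omega)
  have hz1 := hz.norm'_eq_one (by omega)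
  refine ⟨circulant (oddPowerPhases _ m),
    isHermitian_circulant (oddPowerPhases_neg hz1 hz.pow_eq_one),
    fun i => by simp [oddPowerPhases],
    fun i j hij => norm_oddPowerPhases hz1 (sub_ne_zero.2 hij), ?_⟩
  rw [circulant_mulVec_const_one, sum_oddPowerPhases hz (by omega)]
  rfl
end
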